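/- arXiv:2207.01589 — 5 statements merged into one kernel-verified Lean document; each statement's English description precedes it below -/
import Mathlib

section
/- Let q, m be positive integers, let U = {1,...,3q}, and let S_1,...,S_m be subsets of U each of size exactly 3. Construct the repeated matching instance I with T = 3 rounds and n = m + 3q agents and items as follows. The agents are m 'set agents' (indexed j ∈ {1,...,m}) and 3q 'element agents' (indexed m+i for i ∈ U). The items are 3q 'element items' (one item i for each i ∈ U), m−q 'space-filling items', and q 'dummy items'. Valuations: for each set agent j and each element g ∈ S_j, v_j(g,1) = 1; for each set agent j and each space-filling item g, v_j(g,3) = 3; for each element agent m+i, v_{m+i}(i,2) = 3; all other valuations are 0. Then there exist q pairwise disjoint sets among S_1,...,S_m if and only if I admits a repeated matching of social welfare exactly 3m + 9q. -/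
open Finset

/-- The number of rounds in which agent `i` is matched to item `g`
under the repeated matching `A` (a sequence of `T` bijections from agents to items). -/
def mult {α β : Type*} [DecidableEq β] {T : ℕ} (A : Fin T → α ≃ β) (i : α) (g : β) : ℕ :=
  (Finset.univ.filter fun t : Fin T => A t i = g).card

/-- The value of a bundle with multiplicities `B` under the valuation `v`,
where `v g t` is the value of the `t`-th copy of item `g`. -/
def bundleValue {β : Type*} [Fintype β] (v : β → ℕ → ℝ) (B : β → ℕ) : ℝ :=
  ∑ g : β, ∑ t ∈ Finset.range (B g), v g (t + 1)

/-- The social welfare of a repeated matching. -/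
def SW {α β : Type*} [Fintype α] [Fintype β] [DecidableEq β] {T : ℕ}
    (v : α → β → ℕ → ℝ) (A : Fin T → α ≃ β) : ℝ :=
  ∑ i : α, bundleValue (v i) (mult A i)

/-- Remove one copy of `g` from the bundle `B` (if present; otherwise leave `B` intact). -/
def removeOne {β : Type*} [DecidableEq β] (B : β → ℕ) (g : β) : β → ℕ :=
  fun g' => if g' = g then B g' - 1 else B g'

/-- `EF1`: every agent `i` values her bundle at least as much as any other agent `j`'s
bundle after removing one copy of some item. -/
def EF1 {α β : Type*} [Fintype β] [DecidableEq β] {T : ℕ}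
    (v : α → β → ℕ → ℝ) (A : Fin T → α ≃ β) : Prop :=
  ∀ i j : α, ∃ g : β,
    bundleValue (v i) (mult A i) ≥ bundleValue (v i) (removeOne (mult A j) g)

/-!
Every agent values any three copies of items at most 3, so welfare `3m + 9q` forces every
agent to get exactly 3. Each element agent then holds its own item twice, which leaves one copy
of every element item for the set agents. A set agent gets 3 either from its three elements,
one copy each, or from a single space-filling item held in all three rounds. The set agents of
the first kind are therefore pairwise disjoint, and since there are only `m - q` space-filling
items there are at least `q` of them.

Conversely, an exact cover `X` prescribes how many copies of each item every agent should get.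
All row and column sums of this matrix are 3, so by König's theorem, proved from Hall's theorem
by peeling off one perfect matching at a time, it is realised by three rounds of matchings.
-/

section RepeatedMatching

variable {α β : Type*} {T : ℕ}

lemma mult_eq_sum [DecidableEq β] (A : Fin T → α ≃ β) (i : α) (g : β) :
    mult A i g = ∑ t, if A t i = g then 1 else 0 := by
  rw [mult, Finset.card_filter]

lemma mult_cons [DecidableEq β] (e : α ≃ β) (A : Fin T → α ≃ β) (i : α) (g : β) :
    mult (Fin.cons e A : Fin (T + 1) → α ≃ β) i g =
      (if e i = g then 1 else 0) + mult A i g := by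
  rw [mult_eq_sum, mult_eq_sum, Fin.sum_univ_succ]
  simp

lemma sum_mult_right [Fintype β] [DecidableEq β] (A : Fin T → α ≃ β) (i : α) :
    ∑ g, mult A i g = T := by
  simp_rw [mult_eq_sum]
  rw [Finset.sum_comm]
  simp

lemma sum_mult_left [Fintype α] [DecidableEq α] [DecidableEq β] (A : Fin T → α ≃ β)
    (g : β) : ∑ i, mult A i g = T := by
  simp_rw [mult_eq_sum, ← (A _).eq_symm_apply]
  rw [Finset.sum_comm]
  simp

lemma sum_mult_le [Fintype α] [DecidableEq α] [DecidableEq β] (A : Fin T → α ≃ β) (g : β)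
    (s : Finset α) : ∑ i ∈ s, mult A i g ≤ T :=
  (Finset.sum_le_sum_of_subset (Finset.subset_univ s)).trans (sum_mult_left A g).le

lemma card_le_card_of_forall_exists_le_mult [Fintype α] [DecidableEq α] [DecidableEq β]
    (hT : 0 < T) (A : Fin T → α ≃ β) (s : Finset α) (t : Finset β)
    (h : ∀ i ∈ s, ∃ g ∈ t, T ≤ mult A i g) : #s ≤ #t := by
  refine Finset.card_le_card_of_forall_subsingleton (fun i g => T ≤ mult A i g) h ?_
  intro g _ i₁ hi₁ i₂ hi₂
  by_contra hne
  have := sum_mult_le A g {i₁, i₂}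
  rw [Finset.sum_pair hne] at this
  have := hi₁.2
  have := hi₂.2
  omega

variable [Fintype α] [Fintype β]

lemma card_mul_eq_card_mul_of_sum_eq (B : α → β → ℕ)
    (hrow : ∀ i, ∑ g, B i g = T) (hcol : ∀ g, ∑ i, B i g = T) :
    Fintype.card α * T = Fintype.card β * T :=
  calc Fintype.card α * T = ∑ i, ∑ g, B i g := by simp [hrow]
    _ = ∑ g, ∑ i, B i g := Finset.sum_comm
    _ = Fintype.card β * T := by simp [hcol]

/-- Hall's condition holds for the support of `B`: rows `s` carry mass `#s * T`, all of it in
the columns of their neighbourhood `N`, which carry mass `#N * T`. -/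
lemma exists_equiv_forall_pos_of_sum_eq (B : α → β → ℕ) (hT : 0 < T)
    (hrow : ∀ i, ∑ g, B i g = T) (hcol : ∀ g, ∑ i, B i g = T) :
    ∃ e : α ≃ β, ∀ i, 0 < B i (e i) := by
  classical
  set N : α → Finset β := fun i => {g | 0 < B i g}
  have hall : ∀ s : Finset α, #s ≤ #(s.biUnion N) := by
    intro s
    refine le_of_mul_le_mul_right ?_ hT
    calc #s * T = ∑ i ∈ s, ∑ g ∈ s.biUnion N, B i g := by
          rw [← smul_eq_mul, ← Finset.sum_const, ← Finset.sum_congr rfl fun i _ => hrow i]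
          refine Finset.sum_congr rfl fun i hi => (Finset.sum_subset (Finset.subset_univ _) ?_).symm
          intro g _ hg
          by_contra hpos
          refine hg (Finset.mem_biUnion.mpr ⟨i, hi, ?_⟩)
          simp only [N, mem_filter, mem_univ, true_and]
          omega
      _ ≤ ∑ g ∈ s.biUnion N, ∑ i, B i g := by
          rw [Finset.sum_comm]
          exact Finset.sum_le_sum fun g _ => Finset.sum_le_sum_of_subset (Finset.subset_univ s)
      _ = #(s.biUnion N) * T := by simp [hcol]
  obtain ⟨f, hf, hfN⟩ := (Finset.all_card_le_biUnion_card_iff_exists_injective N).mp hall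
  have hcard := Nat.eq_of_mul_eq_mul_right hT (card_mul_eq_card_mul_of_sum_eq B hrow hcol)
  have hbij := (Fintype.bijective_iff_injective_and_card f).mpr ⟨hf, hcard⟩
  exact ⟨Equiv.ofBijective f hbij, fun i => by simpa [N] using hfN i⟩

/-- König: a `T`-regular bipartite multigraph is the union of `T` perfect matchings. -/
theorem exists_mult_eq_of_sum_eq [DecidableEq β] (B : α → β → ℕ)
    (hrow : ∀ i, ∑ g, B i g = T) (hcol : ∀ g, ∑ i, B i g = T) :
    ∃ A : Fin T → α ≃ β, mult A = B := by
  induction T generalizing B with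
  | zero =>
    refine ⟨Fin.elim0, funext fun i => funext fun g => ?_⟩
    simp only [mult, Finset.univ_eq_empty, Finset.filter_empty, Finset.card_empty]
    exact ((Finset.sum_eq_zero_iff.mp (hrow i)) g (Finset.mem_univ g)).symm
  | succ T ih =>
    obtain ⟨e, he⟩ := exists_equiv_forall_pos_of_sum_eq B T.succ_pos hrow hcol
    set B' : α → β → ℕ := fun i g => B i g - if e i = g then 1 else 0
    have hB : ∀ i g, B i g = (if e i = g then 1 else 0) + B' i g := by
      intro i g
      by_cases h : e i = g
      · subst h
        have := he i
        simp only [B', if_true]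
        omega
      · simp [B', h]
    have hrow' : ∀ i, ∑ g, B' i g = T := by
      intro i
      have := hrow i
      rw [Finset.sum_congr rfl fun g _ => hB i g, Finset.sum_add_distrib, Finset.sum_ite_eq,
        if_pos (Finset.mem_univ _)] at this
      omega
    have hcol' : ∀ g, ∑ i, B' i g = T := by
      intro g
      have := hcol g
      have hone : ∑ i, (if e i = g then 1 else 0) = 1 := by
        rw [Fintype.sum_eq_single (e.symm g) fun i hi => if_neg fun h => hi (by simp [← h])]
        simp
      rw [Finset.sum_congr rfl fun i _ => hB i g, Finset.sum_add_distrib, hone] at this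
      omega
    obtain ⟨A, hA⟩ := ih B' hrow' hcol'
    exact ⟨Fin.cons e A, funext fun i => funext fun g => by rw [mult_cons, hA, hB]⟩

end RepeatedMatching

lemma sum_range_ite_and_succ_eq (P : Prop) [Decidable P] {k : ℕ} (hk : 0 < k) (c : ℝ)
    (N : ℕ) :
    ∑ t ∈ range N, (if P ∧ t + 1 = k then c else 0) = if P ∧ k ≤ N then c else 0 := by
  by_cases hP : P
  · have : ∀ t, (t + 1 = k) ↔ (t = k - 1) := fun t => by omega
    simp only [hP, true_and, this, Finset.sum_ite_eq', Finset.mem_range]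
    congr 1
    exact propext (by omega)
  · simp [hP]

section X3C

variable {q m : ℕ}

def x3cValuation (q m : ℕ) (S : Fin m → Finset (Fin (3 * q))) (a g : Fin (m + 3 * q))
    (t : ℕ) : ℝ :=
  if h : (a : ℕ) < m ∧ (g : ℕ) < 3 * q then
    (if (⟨(g : ℕ), h.2⟩ : Fin (3 * q)) ∈ S ⟨(a : ℕ), h.1⟩ ∧ t = 1 then 1 else 0)
  else if (a : ℕ) < m ∧ 3 * q ≤ (g : ℕ) ∧ (g : ℕ) < m + 2 * q ∧ t = 3 then 3
  else if m ≤ (a : ℕ) ∧ (g : ℕ) + m = (a : ℕ) ∧ t = 2 then 3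
  else 0

def elemItem (e : Fin (3 * q)) : Fin (m + 3 * q) := Fin.cast (Nat.add_comm _ _) (Fin.castAdd m e)

/-- `padItem k` is space-filling for `k < m - q` and a dummy item otherwise. -/
def padItem (k : Fin m) : Fin (m + 3 * q) := Fin.cast (Nat.add_comm _ _) (Fin.natAdd (3 * q) k)

@[simp] lemma val_elemItem (e : Fin (3 * q)) : (elemItem e : Fin (m + 3 * q)).val = e := rfl

@[simp] lemma val_padItem (k : Fin m) : (padItem k : Fin (m + 3 * q)).val = 3 * q + k := rfl

@[simp] lemma elemItem_inj {e e' : Fin (3 * q)} :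
    (elemItem e : Fin (m + 3 * q)) = elemItem e' ↔ e = e' := by
  simp [Fin.ext_iff]

@[simp] lemma padItem_inj {k k' : Fin m} :
    (padItem k : Fin (m + 3 * q)) = padItem k' ↔ k = k' := by
  simp [Fin.ext_iff]

lemma padItem_injective : Function.Injective (padItem : Fin m → Fin (m + 3 * q)) :=
  fun _ _ h => padItem_inj.mp h

@[simp] lemma elemItem_ne_padItem (e : Fin (3 * q)) (k : Fin m) :
    (elemItem e : Fin (m + 3 * q)) ≠ padItem k := by
  simp only [ne_eq, Fin.ext_iff, val_elemItem, val_padItem]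
  omega

lemma sum_items {M : Type*} [AddCommMonoid M] (f : Fin (m + 3 * q) → M) :
    ∑ g, f g = ∑ e, f (elemItem e) + ∑ k, f (padItem k) := by
  rw [← (finCongr (Nat.add_comm (3 * q) m)).sum_comp, Fin.sum_univ_add]
  rfl

lemma elemItem_or_padItem (g : Fin (m + 3 * q)) :
    (∃ e : Fin (3 * q), g = elemItem e) ∨ ∃ k : Fin m, g = padItem k := by
  by_cases hg : (g : ℕ) < 3 * q
  · exact Or.inl ⟨⟨g, hg⟩, Fin.ext rfl⟩
  · exact Or.inr ⟨⟨g - 3 * q, by omega⟩, Fin.ext (by simp only [val_padItem]; omega)⟩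

variable (S : Fin m → Finset (Fin (3 * q)))

@[simp] lemma x3cValuation_castAdd_elemItem (j : Fin m) (e : Fin (3 * q)) (t : ℕ) :
    x3cValuation q m S (Fin.castAdd (3 * q) j) (elemItem e) t =
      if e ∈ S j ∧ t = 1 then 1 else 0 := by
  simp only [x3cValuation, Fin.val_castAdd, Fin.is_lt, val_elemItem, and_self, ↓reduceDIte,
    Fin.eta]
  congr

@[simp] lemma x3cValuation_castAdd_padItem (j k : Fin m) (t : ℕ) :
    x3cValuation q m S (Fin.castAdd (3 * q) j) (padItem k) t =
      if (k : ℕ) < m - q ∧ t = 3 then 3 else 0 := by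
  have hj : ¬ m ≤ (j : ℕ) := not_le.mpr j.isLt
  have hk : 3 * q + (k : ℕ) < m + 2 * q ↔ (k : ℕ) < m - q := by omega
  simp [x3cValuation, hj, hk]

@[simp] lemma x3cValuation_natAdd (i : Fin (3 * q)) (g : Fin (m + 3 * q)) (t : ℕ) :
    x3cValuation q m S (Fin.natAdd m i) g t = if g = elemItem i ∧ t = 2 then 3 else 0 := by
  simp [x3cValuation, Fin.ext_iff, add_comm]

lemma bundleValue_castAdd (j : Fin m) (B : Fin (m + 3 * q) → ℕ) :
    bundleValue (x3cValuation q m S (Fin.castAdd (3 * q) j)) B =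
      ∑ e, (if e ∈ S j ∧ 1 ≤ B (elemItem e) then 1 else 0) +
        ∑ k : Fin m, (if (k : ℕ) < m - q ∧ 3 ≤ B (padItem k) then 3 else 0) := by
  simp only [bundleValue, sum_items, x3cValuation_castAdd_elemItem,
    x3cValuation_castAdd_padItem, sum_range_ite_and_succ_eq _ one_pos,
    sum_range_ite_and_succ_eq _ three_pos]

lemma bundleValue_natAdd (i : Fin (3 * q)) (B : Fin (m + 3 * q) → ℕ) :
    bundleValue (x3cValuation q m S (Fin.natAdd m i)) B =
      if 2 ≤ B (elemItem i) then 3 else 0 := by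
  simp only [bundleValue, x3cValuation_natAdd, sum_range_ite_and_succ_eq _ two_pos]
  simp [ite_and]

lemma bundleValue_le_three (a : Fin (m + 3 * q)) (B : Fin (m + 3 * q) → ℕ)
    (hB : ∑ g, B g = 3) : bundleValue (x3cValuation q m S a) B ≤ 3 := by
  induction a using Fin.addCases with
  | left j =>
    have hsum : ∑ e, (B (elemItem e) : ℝ) + ∑ k, (B (padItem k) : ℝ) = 3 := by
      rw [← sum_items (fun g => (B g : ℝ))]
      exact_mod_cast hB
    refine le_of_le_of_eq ?_ hsum
    rw [bundleValue_castAdd]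
    gcongr with e _ k _
    · split_ifs with h
      · exact_mod_cast h.2
      · positivity
    · split_ifs with h
      · exact_mod_cast h.2
      · positivity
  | right i =>
    rw [bundleValue_natAdd]
    split_ifs <;> norm_num

lemma bundleValue_eq_three_of_SW_eq (A : Fin 3 → Fin (m + 3 * q) ≃ Fin (m + 3 * q))
    (hA : SW (x3cValuation q m S) A = 3 * m + 9 * q) (a : Fin (m + 3 * q)) :
    bundleValue (x3cValuation q m S a) (mult A a) = 3 := by
  have hle : ∀ a ∈ univ, bundleValue (x3cValuation q m S a) (mult A a) ≤ 3 :=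
    fun a _ => bundleValue_le_three S a _ (sum_mult_right A a)
  refine (Finset.sum_eq_sum_iff_of_le hle).mp ?_ a (mem_univ a)
  rw [← SW, hA, Finset.sum_const, Finset.card_univ, Fintype.card_fin, nsmul_eq_mul]
  push_cast
  ring

lemma two_le_of_bundleValue_natAdd_eq_three (i : Fin (3 * q)) (B : Fin (m + 3 * q) → ℕ)
    (h3 : bundleValue (x3cValuation q m S (Fin.natAdd m i)) B = 3) : 2 ≤ B (elemItem i) := by
  rw [bundleValue_natAdd] at h3
  by_contra h
  rw [if_neg h] at h3
  norm_num at h3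

lemma one_le_of_bundleValue_castAdd_eq_three (hS : ∀ j, (S j).card = 3) (j : Fin m)
    (B : Fin (m + 3 * q) → ℕ) (hpad : ∀ k : Fin m, (k : ℕ) < m - q → B (padItem k) < 3)
    (h3 : bundleValue (x3cValuation q m S (Fin.castAdd (3 * q) j)) B = 3) {e : Fin (3 * q)}
    (he : e ∈ S j) : 1 ≤ B (elemItem e) := by
  have hpad' : ∀ k : Fin m, ¬ ((k : ℕ) < m - q ∧ 3 ≤ B (padItem k)) :=
    fun k hk => (hpad k hk.1).not_ge hk.2
  simp only [bundleValue_castAdd, hpad', if_false, Finset.sum_const_zero, add_zero] at h3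
  have hle : ∀ e ∈ univ, (if e ∈ S j ∧ 1 ≤ B (elemItem e) then (1 : ℝ) else 0) ≤
      if e ∈ S j then 1 else 0 := by
    intro e _
    split_ifs <;> simp_all
  have hsum : ∑ e, (if e ∈ S j then (1 : ℝ) else 0) = 3 := by simp [hS]
  have := (Finset.sum_eq_sum_iff_of_le hle).mp (h3.trans hsum.symm) e (mem_univ e)
  by_contra h
  simp [he, h] at this

theorem exists_pairwise_disjoint_of_SW_eq (hqm : q ≤ m) (hS : ∀ j, (S j).card = 3)
    (A : Fin 3 → Fin (m + 3 * q) ≃ Fin (m + 3 * q))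
    (hA : SW (x3cValuation q m S) A = 3 * m + 9 * q) :
    ∃ X : Finset (Fin m), X.card = q ∧
      ∀ j ∈ X, ∀ k ∈ X, j ≠ k → Disjoint (S j) (S k) := by
  have hval := bundleValue_eq_three_of_SW_eq S A hA
  set X : Finset (Fin m) :=
    {j | ∀ k : Fin m, (k : ℕ) < m - q → mult A (Fin.castAdd (3 * q) j) (padItem k) < 3}
  have hdisj : ∀ j ∈ X, ∀ k ∈ X, j ≠ k → Disjoint (S j) (S k) := by
    intro j hj k hk hjk
    refine Finset.disjoint_left.mpr fun e hej hek => ?_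
    have hjk' := (Fin.castAdd_injective m (3 * q)).ne hjk
    have hnat : ∀ l : Fin m, Fin.castAdd (3 * q) l ≠ Fin.natAdd m e := fun l h => by
      have := congrArg Fin.val h
      simp only [Fin.val_castAdd, Fin.val_natAdd] at this
      omega
    have := sum_mult_le A (elemItem e)
      {Fin.castAdd (3 * q) j, Fin.castAdd (3 * q) k, Fin.natAdd m e}
    rw [Finset.sum_insert (by simp [hjk', hnat]), Finset.sum_pair (hnat k)] at this
    have := one_le_of_bundleValue_castAdd_eq_three S hS j _ (mem_filter.mp hj).2 (hval _) hej
    have := one_le_of_bundleValue_castAdd_eq_three S hS k _ (mem_filter.mp hk).2 (hval _) hek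
    have := two_le_of_bundleValue_natAdd_eq_three S e _ (hval _)
    omega
  have hcompl : Xᶜ.card ≤ m - q := by
    calc Xᶜ.card = (Xᶜ.map (Fin.castAddEmb (3 * q))).card := (card_map _).symm
      _ ≤ (({k | (k : ℕ) < m - q} : Finset (Fin m)).map
            ⟨padItem, padItem_injective⟩).card := by
          refine card_le_card_of_forall_exists_le_mult three_pos A _ _ fun a ha => ?_
          obtain ⟨j, hj, rfl⟩ := Finset.mem_map.mp ha
          simp only [X, Finset.mem_compl, Finset.mem_filter, Finset.mem_univ, true_and,
            not_forall, not_lt] at hj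
          obtain ⟨k, hk, h⟩ := hj
          exact ⟨padItem k, Finset.mem_map_of_mem _ (by simpa using hk), h⟩
      _ = m - q := by simp [Fin.card_filter_val_lt]
  have hX : q ≤ X.card := by
    have := Finset.card_add_card_compl X
    simp only [Fintype.card_fin] at this
    omega
  obtain ⟨Y, hYX, hY⟩ := Finset.exists_subset_card_eq hX
  exact ⟨Y, hY, fun j hj k hk => hdisj j (hYX hj) k (hYX hk)⟩

lemma exists_perm_mem_iff_le (X : Finset (Fin m)) (hX : X.card = q) :
    ∃ π : Equiv.Perm (Fin m), ∀ j, j ∈ X ↔ m - q ≤ (π j : ℕ) := by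
  have hle : q ≤ m := hX ▸ (card_le_univ X).trans_eq (Fintype.card_fin m)
  have hcard : Fintype.card {j // j ∈ X} = Fintype.card {k : Fin m // m - q ≤ (k : ℕ)} := by
    have := Finset.card_filter_add_card_filter_not (s := univ)
      (fun k : Fin m => (k : ℕ) < m - q)
    simp only [Fin.card_filter_val_lt, not_lt, card_univ, Fintype.card_fin] at this
    rw [Fintype.card_coe, Fintype.card_subtype]
    omega
  let e : {j // j ∈ X} ≃ {k : Fin m // m - q ≤ (k : ℕ)} := Fintype.equivOfCardEq hcard
  refine ⟨e.extendSubtype, fun j => ⟨e.extendSubtype_mem j, fun hj => ?_⟩⟩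
  by_contra h
  exact e.extendSubtype_not_mem j h hj

lemma exists_cover_index (hS : ∀ j, (S j).card = 3) (X : Finset (Fin m)) (hX : X.card = q)
    (hd : ∀ j ∈ X, ∀ k ∈ X, j ≠ k → Disjoint (S j) (S k)) :
    ∃ J : Fin (3 * q) → Fin m, (∀ i, J i ∈ X) ∧
      ∀ i, ∀ j ∈ X, i ∈ S j ↔ J i = j := by
  have hcover : X.biUnion S = univ := by
    refine Finset.eq_univ_of_card _ ?_
    rw [Finset.card_biUnion hd, Finset.sum_congr rfl fun j _ => hS j]
    simp [hX, mul_comm]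
  choose J hJX hJS using fun i => Finset.mem_biUnion.mp (hcover ▸ mem_univ i)
  refine ⟨J, hJX, fun i j hj => ⟨fun hij => ?_, fun h => h ▸ hJS i⟩⟩
  by_contra hne
  exact Finset.disjoint_left.mp (hd j hj (J i) (hJX i) (Ne.symm hne)) hij (hJS i)

/-- Pad item `π j` is taken three times by set agent `j` if `j ∉ X` (then it is space-filling),
and otherwise once by each element agent of `S j` (then it is a dummy item). -/
def coverBundle (X : Finset (Fin m)) (π : Equiv.Perm (Fin m)) (J : Fin (3 * q) → Fin m) :
    Fin (m + 3 * q) → Fin (m + 3 * q) → ℕ :=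
  Fin.addCases
    (fun j => if j ∈ X then ∑ e ∈ S j, Pi.single (elemItem e) 1
      else Pi.single (padItem (π j)) 3)
    (fun i => Pi.single (elemItem i) 2 + Pi.single (padItem (π (J i))) 1)

section CoverBundle

variable (X : Finset (Fin m)) (π : Equiv.Perm (Fin m)) (J : Fin (3 * q) → Fin m)

@[simp] lemma coverBundle_castAdd_elemItem (j : Fin m) (e : Fin (3 * q)) :
    coverBundle S X π J (Fin.castAdd (3 * q) j) (elemItem e) =
      if j ∈ X ∧ e ∈ S j then 1 else 0 := by
  by_cases hj : j ∈ X <;> simp [coverBundle, hj, Finset.sum_apply, Pi.single_apply]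

@[simp] lemma coverBundle_castAdd_padItem (j k : Fin m) :
    coverBundle S X π J (Fin.castAdd (3 * q) j) (padItem k) =
      if j ∉ X ∧ π j = k then 3 else 0 := by
  by_cases hj : j ∈ X <;> simp [coverBundle, hj, Finset.sum_apply, Pi.single_apply, eq_comm]

@[simp] lemma coverBundle_natAdd_elemItem (i e : Fin (3 * q)) :
    coverBundle S X π J (Fin.natAdd m i) (elemItem e) = if i = e then 2 else 0 := by
  simp [coverBundle, Pi.single_apply, eq_comm]

@[simp] lemma coverBundle_natAdd_padItem (i : Fin (3 * q)) (k : Fin m) :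
    coverBundle S X π J (Fin.natAdd m i) (padItem k) = if π (J i) = k then 1 else 0 := by
  simp [coverBundle, Pi.single_apply, eq_comm]

lemma sum_coverBundle_right (hS : ∀ j, (S j).card = 3) (a : Fin (m + 3 * q)) :
    ∑ g, coverBundle S X π J a g = 3 := by
  induction a using Fin.addCases with
  | left j => by_cases hj : j ∈ X <;> simp [sum_items, hj, hS]
  | right i => simp [sum_items]

lemma sum_coverBundle_left (hS : ∀ j, (S j).card = 3) (hJX : ∀ i, J i ∈ X)
    (hJ : ∀ i, ∀ j ∈ X, i ∈ S j ↔ J i = j) (g : Fin (m + 3 * q)) :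
    ∑ a, coverBundle S X π J a g = 3 := by
  rcases elemItem_or_padItem g with ⟨e, rfl⟩ | ⟨k, rfl⟩
  · have hcov : ∀ j, (j ∈ X ∧ e ∈ S j) ↔ J e = j := fun j =>
      ⟨fun h => (hJ e j h.1).mp h.2, fun h => h ▸ ⟨hJX e, (hJ e _ (hJX e)).mpr rfl⟩⟩
    simp [Fin.sum_univ_add, hcov]
  · obtain ⟨j, rfl⟩ := π.surjective k
    by_cases hj : j ∈ X
    · have hfib : ∀ i, J i = j ↔ i ∈ S j := fun i => (hJ i j hj).symm
      have hX : ∀ i, ¬ (i ∉ X ∧ i = j) := fun i h => h.1 (h.2 ▸ hj)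
      simp [Fin.sum_univ_add, hfib, hS, hX]
    · have hfib : ∀ i, J i ≠ j := fun i h => hj (h ▸ hJX i)
      have hX : ∀ i, (i ∉ X ∧ i = j) ↔ i = j :=
        fun i => ⟨And.right, fun h => ⟨h ▸ hj, h⟩⟩
      simp [Fin.sum_univ_add, hfib, hX]

lemma bundleValue_coverBundle (hS : ∀ j, (S j).card = 3)
    (hπ : ∀ j, j ∈ X ↔ m - q ≤ (π j : ℕ)) (a : Fin (m + 3 * q)) :
    bundleValue (x3cValuation q m S a) (coverBundle S X π J a) = 3 := by
  induction a using Fin.addCases with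
  | left j =>
    rw [bundleValue_castAdd]
    by_cases hj : j ∈ X
    · have helem : ∀ e, e ∈ S j ∧
          1 ≤ coverBundle S X π J (Fin.castAdd (3 * q) j) (elemItem e) ↔ e ∈ S j := by
        intro e
        by_cases he : e ∈ S j <;> simp [he, hj]
      simp only [helem]
      simp [hj, hS]
    · have : (π j : ℕ) < m - q := by have := (hπ j).not.mp hj; omega
      rw [Fintype.sum_eq_single (π j) fun k hk => ?_]
      · simp [hj, this]
      · simp [hj, Ne.symm hk]
  | right i => simp [bundleValue_natAdd]

end CoverBundle

theorem exists_SW_eq_of_pairwise_disjoint (hS : ∀ j, (S j).card = 3) (X : Finset (Fin m))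
    (hX : X.card = q) (hd : ∀ j ∈ X, ∀ k ∈ X, j ≠ k → Disjoint (S j) (S k)) :
    ∃ A : Fin 3 → Fin (m + 3 * q) ≃ Fin (m + 3 * q),
      SW (x3cValuation q m S) A = 3 * m + 9 * q := by
  obtain ⟨J, hJX, hJ⟩ := exists_cover_index S hS X hX hd
  obtain ⟨π, hπ⟩ := exists_perm_mem_iff_le X hX
  obtain ⟨A, hA⟩ := exists_mult_eq_of_sum_eq (coverBundle S X π J)
    (sum_coverBundle_right S X π J hS) (sum_coverBundle_left S X π J hS hJX hJ)
  refine ⟨A, ?_⟩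
  rw [SW, hA, Finset.sum_congr rfl fun a _ => bundleValue_coverBundle S X π J hS hπ a,
    Finset.sum_const, Finset.card_univ, Fintype.card_fin, nsmul_eq_mul]
  push_cast
  ring

end X3C

theorem stmt0_general (q m : ℕ) (hqm : q ≤ m)
    (S : Fin m → Finset (Fin (3 * q))) (hS : ∀ j, (S j).card = 3)
    (v : Fin (m + 3 * q) → Fin (m + 3 * q) → ℕ → ℝ)
    (hv : ∀ (a g : Fin (m + 3 * q)) (t : ℕ),
      v a g t =
        if h : (a : ℕ) < m ∧ (g : ℕ) < 3 * q then
          (if (⟨(g : ℕ), h.2⟩ : Fin (3 * q)) ∈ S ⟨(a : ℕ), h.1⟩ ∧ t = 1 then 1 else 0)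
        else if (a : ℕ) < m ∧ 3 * q ≤ (g : ℕ) ∧ (g : ℕ) < m + 2 * q ∧ t = 3 then 3
        else if m ≤ (a : ℕ) ∧ (g : ℕ) + m = (a : ℕ) ∧ t = 2 then 3
        else 0) :
    (∃ X : Finset (Fin m), X.card = q ∧
        ∀ j ∈ X, ∀ k ∈ X, j ≠ k → Disjoint (S j) (S k)) ↔
      (∃ A : Fin 3 → Fin (m + 3 * q) ≃ Fin (m + 3 * q),
        SW v A = 3 * (m : ℝ) + 9 * (q : ℝ)) := by
  obtain rfl : v = x3cValuation q m S := funext fun a => funext fun g => funext (hv a g)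
  exact ⟨fun ⟨X, hX, hd⟩ => exists_SW_eq_of_pairwise_disjoint S hS X hX hd,
    fun ⟨A, hA⟩ => exists_pairwise_disjoint_of_SW_eq S hqm hS A hA⟩

/-- X3C reduction: there are `q` pairwise disjoint sets among `S 0, ..., S (m-1)`
iff the constructed repeated matching instance (with `T = 3` rounds and `m + 3q`
agents/items) admits a repeated matching of social welfare exactly `3m + 9q`.
Agents `a` with `a < m` are set agents, agents `a` with `m ≤ a` are element
agents (agent `m + i` for element `i`).  Items `g` with `g < 3q` are element
items, items with `3q ≤ g < m + 2q` are space-filling items, and items with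
`m + 2q ≤ g` are dummy items. -/
theorem stmt0 (q m : ℕ) (hq : 0 < q) (hm : 0 < m) (hqm : q ≤ m)
    (S : Fin m → Finset (Fin (3 * q))) (hS : ∀ j, (S j).card = 3)
    (v : Fin (m + 3 * q) → Fin (m + 3 * q) → ℕ → ℝ)
    (hv : ∀ (a g : Fin (m + 3 * q)) (t : ℕ),
      v a g t =
        if h : (a : ℕ) < m ∧ (g : ℕ) < 3 * q then
          (if (⟨(g : ℕ), h.2⟩ : Fin (3 * q)) ∈ S ⟨(a : ℕ), h.1⟩ ∧ t = 1 then 1 else 0)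
        else if (a : ℕ) < m ∧ 3 * q ≤ (g : ℕ) ∧ (g : ℕ) < m + 2 * q ∧ t = 3 then 3
        else if m ≤ (a : ℕ) ∧ (g : ℕ) + m = (a : ℕ) ∧ t = 2 then 3
        else 0) :
    (∃ X : Finset (Fin m), X.card = q ∧
        ∀ j ∈ X, ∀ k ∈ X, j ≠ k → Disjoint (S j) (S k)) ↔
      (∃ A : Fin 3 → Fin (m + 3 * q) ≃ Fin (m + 3 * q),
        SW v A = 3 * (m : ℝ) + 9 * (q : ℝ)) :=
  stmt0_general q m hqm S hS v hv
end

section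
/- Let I be a repeated matching instance with n agents/items and T rounds in which every valuation is monotone non-decreasing, i.e., v_i(g,t) ≤ v_i(g,t+1) for all agents i, items g, and t ∈ {1,...,T−1}. Then there exists a single bijection σ from agents to items such that the repeated matching that uses σ in every one of the T rounds has maximum social welfare among all repeated matchings of I. -/
/-
Monotonicity means the first `N` copies of an item are worth at most `N / T` of all `T` copies.
Hence `T` times the welfare of any repeated matching `A` is at most `∑ᵢ ∑_g N(Aᵢ, g) Wᵢ(g)`,
where `Wᵢ(g)` is agent `i`'s value for receiving `g` in every round. Counted round by round,
this is the sum over the `T` rounds of the welfare of repeating that round's bijection in every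
round, so a bijection maximizing the welfare of its constant repetition is optimal.
-/

open Finset

section AverageOfMonotone

variable {R : Type*} [CommRing R] [LinearOrder R] [IsStrictOrderedRing R]

theorem mul_sum_range_le_mul_sum_range {g : ℕ → R} {N T : ℕ} (hNT : N ≤ T)
    (hg : MonotoneOn g (Set.Iio T)) :
    (T : R) * ∑ k ∈ range N, g k ≤ N * ∑ k ∈ range T, g k := by
  -- `T · S_N - N · S_T = ∑_{k < N} ∑_{N ≤ t < T} (g k - g t)`, a sum of nonpositive terms.
  have hcross : ∑ k ∈ range N, ∑ t ∈ Ico N T, (g k - g t) ≤ 0 :=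
    sum_nonpos fun k hk => sum_nonpos fun t ht => by
      simp only [mem_range, mem_Ico] at hk ht
      exact sub_nonpos.2 (hg (by simp; omega) (by simpa using ht.2) (by omega))
  simp only [sum_sub_distrib, sum_const, Nat.card_Ico, card_range, nsmul_eq_mul,
    Nat.cast_sub hNT, ← mul_sum] at hcross
  rw [← sum_range_add_sum_Ico g hNT]
  linarith

end AverageOfMonotone

section RepeatedMatching

variable {α β : Type*} {T : ℕ}

/-- The value, under `v`, of receiving item `g` in each of `T` rounds. -/
def repeatedValue (T : ℕ) (v : β → ℕ → ℝ) (g : β) : ℝ :=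
  ∑ t ∈ range T, v g (t + 1)

theorem bundleValue_single [Fintype β] [DecidableEq β] (v : β → ℕ → ℝ) (g : β) :
    bundleValue v (Pi.single g T) = repeatedValue T v g := by
  rw [bundleValue, Fintype.sum_eq_single g fun g' hg' => by simp [hg']]
  simp [repeatedValue]

theorem mul_bundleValue_le [Fintype β] {v : β → ℕ → ℝ} {B : β → ℕ} (hB : ∀ g, B g ≤ T)
    (hv : ∀ g, MonotoneOn (fun k => v g (k + 1)) (Set.Iio T)) :
    T * bundleValue v B ≤ ∑ g, B g * repeatedValue T v g := by
  rw [bundleValue, mul_sum]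
  exact sum_le_sum fun g _ => mul_sum_range_le_mul_sum_range (hB g) (hv g)

theorem mult_le [DecidableEq β] (A : Fin T → α ≃ β) (i : α) (g : β) : mult A i g ≤ T :=
  (card_filter_le _ _).trans (card_fin T).le

theorem mult_const [DecidableEq β] (σ : α ≃ β) (i : α) :
    mult (fun _ : Fin T => σ) i = Pi.single (σ i) T := by
  ext g
  by_cases h : g = σ i
  · subst h; simp [mult]
  · simp [mult, h, Ne.symm h]

theorem sum_mult_mul [Fintype β] [DecidableEq β] (A : Fin T → α ≃ β) (i : α) (w : β → ℝ) :
    ∑ g, mult A i g * w g = ∑ t, w (A t i) := by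
  rw [← sum_fiberwise univ (fun t => A t i)]
  refine sum_congr rfl fun g _ => ?_
  rw [sum_congr rfl fun t ht => by rw [(mem_filter.1 ht).2], sum_const, nsmul_eq_mul, mult]

theorem SW_const [Fintype α] [Fintype β] [DecidableEq β] (v : α → β → ℕ → ℝ) (σ : α ≃ β) :
    SW v (fun _ : Fin T => σ) = ∑ i, repeatedValue T (v i) (σ i) := by
  simp only [SW, mult_const, bundleValue_single]

theorem mul_SW_le_sum_SW_const [Fintype α] [Fintype β] [DecidableEq β] {v : α → β → ℕ → ℝ}
    (hv : ∀ i g, MonotoneOn (fun k => v i g (k + 1)) (Set.Iio T)) (A : Fin T → α ≃ β) :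
    T * SW v A ≤ ∑ t, SW v (fun _ : Fin T => A t) :=
  calc T * SW v A ≤ ∑ i, ∑ g, mult A i g * repeatedValue T (v i) g := by
        rw [SW, mul_sum]
        exact sum_le_sum fun i _ => mul_bundleValue_le (mult_le A i) (hv i)
    _ = ∑ t, SW v (fun _ : Fin T => A t) := by
        simp only [sum_mult_mul, SW_const]
        exact sum_comm

end RepeatedMatching

/-- With monotone non-decreasing valuations, some fixed bijection repeated in all
`T` rounds achieves maximum social welfare. -/
theorem stmt1 (n T : ℕ) (v : Fin n → Fin n → ℕ → ℝ)
    (hmono : ∀ (i g : Fin n) (t : ℕ), 1 ≤ t → t < T → v i g t ≤ v i g (t + 1)) :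
    ∃ σ : Fin n ≃ Fin n, ∀ A : Fin T → Fin n ≃ Fin n,
      SW v A ≤ SW v (fun _ : Fin T => σ) := by
  have hv : ∀ i g, MonotoneOn (fun k => v i g (k + 1)) (Set.Iio T) := fun i g =>
    monotoneOn_of_le_add_one Set.ordConnected_Iio fun k _ _ hk =>
      hmono i g (k + 1) (by omega) (by simpa using hk)
  obtain ⟨σ, -, hσ⟩ := exists_max_image univ
    (fun σ : Fin n ≃ Fin n => SW v (fun _ : Fin T => σ)) univ_nonempty
  refine ⟨σ, fun A => ?_⟩
  rcases T.eq_zero_or_pos with rfl | hT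
  · simp [SW, mult, bundleValue]
  refine le_of_mul_le_mul_left ?_ (Nat.cast_pos.2 hT : (0 : ℝ) < T)
  calc T * SW v A ≤ ∑ t, SW v (fun _ : Fin T => A t) := mul_SW_le_sum_SW_const hv A
    _ ≤ ∑ _t : Fin T, SW v (fun _ : Fin T => σ) :=
        sum_le_sum fun t _ => hσ (A t) (mem_univ _)
    _ = T * SW v (fun _ : Fin T => σ) := by simp
end

section
/- Let G = (V,E) be a finite graph with no isolated vertices, let 0 < δ < |V|^{−2}, and let K be the size of a maximum independent set of G. Construct the repeated matching instance I(G) with T = |V| rounds and n = (2|V|+1)|E| + 1 agents and items as follows. The agents are 'edge agents' (e,i) for each e ∈ E and i ∈ {1,...,2|V|+1}, plus one 'special agent' s. The items are one 'node item' g_u for each u ∈ V, plus n − |V| 'dummy items'. Valuations: for every edge e = (x,y), every i, every u ∈ V, and every t ∈ {1,...,T}, v_{(e,i)}(g_u,t) = δ if u ∈ {x,y} and 0 otherwise; v_s(g_u,t) = 1 for every u ∈ V and t; all agents value every copy of every dummy item at 0. Then every EF1 repeated matching of I(G) has social welfare strictly less than K + 1. -/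
open Finset

/-- The valuation in the instance `I(G)` constructed from a graph `G`:
agents are pairs (edge, copy-index in `Fin (2|V|+1)`) plus a special agent
(`Sum.inr ()`), items are node items (`Sum.inl u` for `u : V`) plus `N` dummy
items.  An edge agent values every copy of a node item of an endpoint of its edge
at `δ`, the special agent values every copy of every node item at `1`, and all
other values are `0`. -/
def graphVal {V : Type*} [Fintype V] [DecidableEq V] (G : SimpleGraph V)
    [DecidableRel G.Adj] (δ : ℝ) (N : ℕ) :
    ((G.edgeFinset × Fin (2 * Fintype.card V + 1)) ⊕ Unit) → (V ⊕ Fin N) → ℕ → ℝ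
  | Sum.inl ei, Sum.inl u, _ => if u ∈ (ei.1 : Sym2 V) then δ else 0
  | Sum.inr _, Sum.inl _, _ => 1
  | _, Sum.inr _, _ => 0

/-!
Consider an edge `xy`. Its `2|V| + 1` edge agents share the `2|V|` copies of `g_x` and `g_y`,
so one of them holds none and values its own bundle at `0`. By EF1 towards the special agent,
the special bundle minus one item contains no copy of `g_x` or `g_y`: the special agent holds
at most one copy of `g_x, g_y` together. As there are no isolated vertices, the node items it
holds are therefore distinct and form an independent set, so its value is at most `K`. The edge
agents hold at most `|V|²` copies of node items, worth `δ` each, and `δ |V|² < 1`.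
-/

lemma SimpleGraph.sum_le_of_adj_add_le_one {V : Type*} [Fintype V] {G : SimpleGraph V}
    (hiso : ∀ x : V, ∃ y : V, G.Adj x y) {K : ℕ}
    (hKmax : ∀ s : Finset V, (∀ x ∈ s, ∀ y ∈ s, ¬ G.Adj x y) → s.card ≤ K)
    {f : V → ℕ} (hf : ∀ x y, G.Adj x y → f x + f y ≤ 1) : ∑ x, f x ≤ K := by
  have hle_one : ∀ x, f x ≤ 1 := fun x => by
    obtain ⟨y, hxy⟩ := hiso x
    have := hf x y hxy
    omega
  have hindep : ∀ x ∈ univ.filter (f · ≠ 0), ∀ y ∈ univ.filter (f · ≠ 0), ¬ G.Adj x y := by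
    intro x hx y hy hxy
    simp only [mem_filter, mem_univ, true_and] at hx hy
    have := hf x y hxy
    omega
  calc ∑ x, f x = ∑ x ∈ univ.filter (f · ≠ 0), f x := (sum_filter_ne_zero _).symm
    _ ≤ ∑ x ∈ univ.filter (f · ≠ 0), 1 := sum_le_sum fun x _ => hle_one x
    _ = (univ.filter (f · ≠ 0)).card := card_eq_sum_ones _ |>.symm
    _ ≤ K := hKmax _ hindep

section RepeatedMatching

variable {α β : Type*} [Fintype α] [DecidableEq β] {T : ℕ} (A : Fin T → α ≃ β)

lemma sum_mult (g : β) : ∑ a, mult A a g = T := by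
  have hone (t : Fin T) : ∑ a, (if A t a = g then 1 else 0) = 1 := by
    rw [Fintype.sum_eq_single ((A t).symm g)
      fun a ha => if_neg (by simpa [Equiv.eq_symm_apply] using ha)]
    simp
  simp only [mult, card_filter]
  rw [sum_comm]
  simp only [hone, sum_const, card_univ, Fintype.card_fin, smul_eq_mul, mul_one]

lemma sum_mult_comp_le {ι : Type*} [Fintype ι] {f : ι → α} (hf : f.Injective) (g : β) :
    ∑ i, mult A (f i) g ≤ T :=
  calc ∑ i, mult A (f i) g = ∑ a ∈ univ.map ⟨f, hf⟩, mult A a g :=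
        (sum_map univ ⟨f, hf⟩ (mult A · g)).symm
    _ ≤ ∑ a, mult A a g := sum_le_univ_sum_of_nonneg fun _ => Nat.zero_le _
    _ = T := sum_mult A g

lemma exists_mult_eq_zero_of_two_mul_lt_card {ι : Type*} [Fintype ι] {f : ι → α}
    (hf : f.Injective) (hcard : 2 * T < Fintype.card ι) (x y : β) :
    ∃ i, mult A (f i) x = 0 ∧ mult A (f i) y = 0 := by
  have hlt : ∑ i, (mult A (f i) x + mult A (f i) y) < ∑ _i : ι, 1 := by
    rw [sum_add_distrib, sum_const, card_univ, smul_eq_mul, mul_one]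
    linarith [sum_mult_comp_le A hf x, sum_mult_comp_le A hf y]
  obtain ⟨i, -, hi⟩ := exists_lt_of_sum_lt hlt
  exact ⟨i, by omega, by omega⟩

end RepeatedMatching

lemma bundleValue_eq_sum_mul {β : Type*} [Fintype β] {v : β → ℕ → ℝ} (w : β → ℝ)
    (hv : ∀ g t, v g t = w g) (B : β → ℕ) : bundleValue v B = ∑ g, (B g : ℝ) * w g := by
  simp [bundleValue, hv]

lemma add_le_one_of_removeOne_eq_zero {β : Type*} [DecidableEq β] {B : β → ℕ} {g x y : β}
    (hxy : x ≠ y) (hx : removeOne B g x = 0) (hy : removeOne B g y = 0) : B x + B y ≤ 1 := by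
  unfold removeOne at hx hy
  split_ifs at hx hy with hxg hyg
  · exact absurd (hxg.trans hyg.symm) hxy
  all_goals omega

section GraphInstance

variable {V : Type*} [Fintype V] [DecidableEq V] {G : SimpleGraph V} [DecidableRel G.Adj]
  {δ : ℝ} {N : ℕ}

lemma bundleValue_graphVal_special (B : V ⊕ Fin N → ℕ) :
    bundleValue (graphVal G δ N (.inr ())) B = ∑ u, (B (.inl u) : ℝ) := by
  rw [bundleValue_eq_sum_mul (Sum.elim 1 0) (by rintro (_ | _) _ <;> rfl),
    Fintype.sum_sum_type]
  simp

lemma bundleValue_graphVal_edge (p : G.edgeFinset × Fin (2 * Fintype.card V + 1))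
    (B : V ⊕ Fin N → ℕ) :
    bundleValue (graphVal G δ N (.inl p)) B =
      ∑ u, (B (.inl u) : ℝ) * if u ∈ (p.1 : Sym2 V) then δ else 0 := by
  rw [bundleValue_eq_sum_mul (Sum.elim (fun u => if u ∈ (p.1 : Sym2 V) then δ else 0) 0)
    (by rintro (_ | _) _ <;> rfl), Fintype.sum_sum_type]
  simp

lemma bundleValue_graphVal_edge_le (hδ : 0 ≤ δ) (p : G.edgeFinset × Fin (2 * Fintype.card V + 1))
    (B : V ⊕ Fin N → ℕ) :
    bundleValue (graphVal G δ N (.inl p)) B ≤ δ * ∑ u, (B (.inl u) : ℝ) := by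
  rw [bundleValue_graphVal_edge, mul_sum]
  refine sum_le_sum fun u _ => ?_
  rw [mul_comm δ]
  gcongr
  split_ifs <;> linarith

lemma eq_zero_of_bundleValue_graphVal_edge_nonpos (hδ : 0 < δ)
    {p : G.edgeFinset × Fin (2 * Fintype.card V + 1)} {B : V ⊕ Fin N → ℕ}
    (hB : bundleValue (graphVal G δ N (.inl p)) B ≤ 0) {u : V} (hu : u ∈ (p.1 : Sym2 V)) :
    B (.inl u) = 0 := by
  rw [bundleValue_graphVal_edge] at hB
  have hnonneg : ∀ w ∈ univ, 0 ≤ (B (.inl w) : ℝ) * if w ∈ (p.1 : Sym2 V) then δ else 0 :=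
    fun w _ => by positivity
  have hu0 := (sum_eq_zero_iff_of_nonneg hnonneg).1 (hB.antisymm (sum_nonneg hnonneg)) u
    (mem_univ u)
  simpa [hu, hδ.ne'] using hu0

variable {A : Fin (Fintype.card V) →
  ((G.edgeFinset × Fin (2 * Fintype.card V + 1)) ⊕ Unit) ≃ (V ⊕ Fin N)}

lemma mult_special_add_mult_special_le_one (hδ : 0 < δ) (hEF1 : EF1 (graphVal G δ N) A)
    {x y : V} (hxy : G.Adj x y) :
    mult A (.inr ()) (.inl x) + mult A (.inr ()) (.inl y) ≤ 1 := by
  let e : G.edgeFinset := ⟨s(x, y), G.mem_edgeFinset.2 hxy⟩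
  obtain ⟨i, hix, hiy⟩ := exists_mult_eq_zero_of_two_mul_lt_card A
    (f := fun i : Fin (2 * Fintype.card V + 1) => Sum.inl (e, i))
    (fun i j hij => by simpa using hij) (by simp) (.inl x) (.inl y)
  have hown : bundleValue (graphVal G δ N (.inl (e, i))) (mult A (.inl (e, i))) = 0 := by
    rw [bundleValue_graphVal_edge]
    refine sum_eq_zero fun u _ => ?_
    split_ifs with hu
    · rcases Sym2.mem_iff.1 hu with rfl | rfl <;> simp [hix, hiy]
    · exact mul_zero _
  obtain ⟨g, hg⟩ := hEF1 (.inl (e, i)) (.inr ())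
  rw [hown] at hg
  exact add_le_one_of_removeOne_eq_zero (Sum.inl_injective.ne hxy.ne)
    (eq_zero_of_bundleValue_graphVal_edge_nonpos hδ hg (Sym2.mem_mk_left x y))
    (eq_zero_of_bundleValue_graphVal_edge_nonpos hδ hg (Sym2.mem_mk_right x y))

lemma bundleValue_graphVal_special_le (hiso : ∀ x : V, ∃ y : V, G.Adj x y) (hδ : 0 < δ)
    {K : ℕ} (hKmax : ∀ s : Finset V, (∀ x ∈ s, ∀ y ∈ s, ¬ G.Adj x y) → s.card ≤ K)
    (hEF1 : EF1 (graphVal G δ N) A) :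
    bundleValue (graphVal G δ N (.inr ())) (mult A (.inr ())) ≤ K := by
  rw [bundleValue_graphVal_special]
  exact_mod_cast G.sum_le_of_adj_add_le_one hiso hKmax
    fun x y hxy => mult_special_add_mult_special_le_one hδ hEF1 hxy

lemma sum_bundleValue_graphVal_edge_le (hδ : 0 ≤ δ) :
    ∑ p, bundleValue (graphVal G δ N (.inl p)) (mult A (.inl p)) ≤
      δ * (Fintype.card V : ℝ) ^ 2 := by
  have hcopies : ∑ p, ∑ u, mult A (.inl p) (.inl u) ≤ Fintype.card V * Fintype.card V := by
    rw [sum_comm]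
    exact sum_le_card_nsmul _ _ _ fun u _ => sum_mult_comp_le A Sum.inl_injective (.inl u)
  calc ∑ p, bundleValue (graphVal G δ N (.inl p)) (mult A (.inl p))
      ≤ ∑ p, δ * ∑ u, (mult A (.inl p) (.inl u) : ℝ) :=
        sum_le_sum fun p _ => bundleValue_graphVal_edge_le hδ p _
    _ = δ * ((∑ p, ∑ u, mult A (.inl p) (.inl u) : ℕ) : ℝ) := by push_cast; rw [mul_sum]
    _ ≤ δ * (Fintype.card V : ℝ) ^ 2 := by
        gcongr
        exact_mod_cast (sq (Fintype.card V)).symm ▸ hcopies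

end GraphInstance

theorem stmt8_general {V : Type*} [Fintype V] [DecidableEq V] (G : SimpleGraph V)
    [DecidableRel G.Adj]
    (hiso : ∀ x : V, ∃ y : V, G.Adj x y)
    (δ : ℝ) (hδ0 : 0 < δ) (hδ1 : δ < 1 / (Fintype.card V : ℝ) ^ 2)
    (N : ℕ)
    (K : ℕ)
    (hKmax : ∀ s : Finset V, (∀ x ∈ s, ∀ y ∈ s, ¬ G.Adj x y) → s.card ≤ K)
    (A : Fin (Fintype.card V) →
      ((G.edgeFinset × Fin (2 * Fintype.card V + 1)) ⊕ Unit) ≃ (V ⊕ Fin N))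
    (hEF1 : EF1 (graphVal G δ N) A) :
    SW (graphVal G δ N) A < (K : ℝ) + 1 := by
  have hV : 0 < (Fintype.card V : ℝ) ^ 2 := one_div_pos.1 (hδ0.trans hδ1)
  have hsmall : δ * (Fintype.card V : ℝ) ^ 2 < 1 := (lt_div_iff₀ hV).1 hδ1
  have hedge := sum_bundleValue_graphVal_edge_le (A := A) hδ0.le
  have hspecial := bundleValue_graphVal_special_le hiso hδ0 hKmax hEF1
  rw [SW, Fintype.sum_sum_type, Fintype.sum_unique (ι := Unit)]
  linarith

/-- If `K` is the size of a maximum independent set of a graph `G` with no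
isolated vertices, then every EF1 repeated matching of the instance `I(G)`
(with `T = |V|` rounds and `n = (2|V|+1)|E| + 1` agents/items) has social
welfare strictly less than `K + 1`. -/
theorem stmt8 {V : Type*} [Fintype V] [DecidableEq V] (G : SimpleGraph V)
    [DecidableRel G.Adj]
    (hiso : ∀ x : V, ∃ y : V, G.Adj x y)
    (δ : ℝ) (hδ0 : 0 < δ) (hδ1 : δ < 1 / (Fintype.card V : ℝ) ^ 2)
    (N : ℕ) (hN : N = (2 * Fintype.card V + 1) * G.edgeFinset.card + 1 - Fintype.card V)
    (K : ℕ)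
    (hKex : ∃ s : Finset V, s.card = K ∧ ∀ x ∈ s, ∀ y ∈ s, ¬ G.Adj x y)
    (hKmax : ∀ s : Finset V, (∀ x ∈ s, ∀ y ∈ s, ¬ G.Adj x y) → s.card ≤ K)
    (A : Fin (Fintype.card V) →
      ((G.edgeFinset × Fin (2 * Fintype.card V + 1)) ⊕ Unit) ≃ (V ⊕ Fin N))
    (hEF1 : EF1 (graphVal G δ N) A) :
    SW (graphVal G δ N) A < (K : ℝ) + 1 :=
  stmt8_general G hiso δ hδ0 hδ1 N K hKmax A hEF1
end

section
/- Let I be a repeated matching instance with n ≥ 2 agents/items and T rounds such that T mod n ∈ {n−2, n−1}, with arbitrary real-valued valuations (mixed items). Then there exists a repeated matching of I that is swapEF. -/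
open Finset

/-- Replace one copy of `gout` by one copy of `gin` in the bundle `B`. -/
def swapBundle {β : Type*} [DecidableEq β] (B : β → ℕ) (gout gin : β) : β → ℕ :=
  fun g => (B g + if g = gin then 1 else 0) - (if g = gout then 1 else 0)

/-- `swapEF`: for every pair of agents `i, j`, either `i` does not envy `j`, or the
envy disappears after swapping a copy of some item of `i` with a copy of some item
of `j`. -/
def swapEF {α β : Type*} [Fintype β] [DecidableEq β] {T : ℕ}
    (v : α → β → ℕ → ℝ) (A : Fin T → α ≃ β) : Prop :=
  ∀ i j : α,
    bundleValue (v i) (mult A i) ≥ bundleValue (v i) (mult A j) ∨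
    ∃ gi gj : β, 1 ≤ mult A i gi ∧ 1 ≤ mult A j gj ∧
      bundleValue (v i) (swapBundle (mult A i) gi gj) ≥
        bundleValue (v i) (swapBundle (mult A j) gj gi)

/-! In the cyclic matching `A^t(i) = i + t` agent `i` receives `q + 1` copies of every item,
`q = T / n`, except that it receives only `q` copies of each of the `n - T % n ≤ 2` items
`i + k` with `k ≥ T % n`. Hence `i` values any bundle of this shape as a fixed total minus the
weights `v_i(g, q + 1)` of its missing items. Comparing the bundles of `i` and `j`, only the
items missing from exactly one of them matter. If there is one such item on each side, either
`i` does not envy `j` or the swap of these two items removes the envy. If there are two on each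
side, giving away the lightest item missing from `j` for the heaviest item missing from `i`
always removes the envy; with three on each side this can fail. -/

lemma exists_swap_of_card_le_two {β : Type*} (w : β → ℝ) {D D' : Finset β} (hcard : #D = #D')
    (hD : #D ≤ 2) :
    ∑ g ∈ D, w g ≤ ∑ g ∈ D', w g ∨
      ∃ a ∈ D, ∃ c ∈ D', ∑ g ∈ D, w g + 2 * w c ≤ ∑ g ∈ D', w g + 2 * w a := by
  obtain h0 | h1 | h2 : #D = 0 ∨ #D = 1 ∨ #D = 2 := by omega
  · left
    rw [card_eq_zero.mp h0, card_eq_zero.mp (hcard.symm.trans h0)]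
  · obtain ⟨a, rfl⟩ := card_eq_one.mp h1
    obtain ⟨c, rfl⟩ := card_eq_one.mp (hcard ▸ h1)
    rcases le_total (w a) (w c) with h | h
    · left
      simpa using h
    · right
      refine ⟨a, mem_singleton_self a, c, mem_singleton_self c, ?_⟩
      simp only [sum_singleton]
      linarith
  · right
    obtain ⟨a, ha, hmax⟩ := D.exists_max_image w (card_pos.mp (by omega))
    obtain ⟨c, hc, hmin⟩ := D'.exists_min_image w (card_pos.mp (by omega))
    have hsum := D.sum_le_card_nsmul w (w a) hmax
    have hsum' := D'.card_nsmul_le_sum w (w c) hmin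
    rw [h2] at hsum
    rw [← hcard, h2] at hsum'
    simp only [nsmul_eq_mul, Nat.cast_ofNat] at hsum hsum'
    exact ⟨a, ha, c, hc, by linarith⟩

section DeficitBundle

variable {β : Type*} [DecidableEq β]

def deficitBundle (q : ℕ) (M : Finset β) : β → ℕ :=
  fun g => if g ∈ M then q else q + 1

lemma one_le_deficitBundle {q : ℕ} {M : Finset β} {g : β} (hg : g ∉ M) :
    1 ≤ deficitBundle q M g := by
  simp [deficitBundle, hg]

lemma swapBundle_deficitBundle {q : ℕ} {M : Finset β} {a c : β} (ha : a ∈ M) (hc : c ∉ M) :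
    swapBundle (deficitBundle q M) c a = deficitBundle q (insert c (M.erase a)) := by
  have hac : a ≠ c := fun h => hc (h ▸ ha)
  funext g
  by_cases hga : g = a
  · subst hga
    simp [swapBundle, deficitBundle, ha, hac]
  · by_cases hgc : g = c
    · subst hgc
      simp [swapBundle, deficitBundle, hc, hac.symm]
    · simp [swapBundle, deficitBundle, hga, hgc]

variable [Fintype β]

lemma bundleValue_deficitBundle (v : β → ℕ → ℝ) (q : ℕ) (M : Finset β) :
    bundleValue v (deficitBundle q M) =
      ∑ g, ∑ t ∈ range (q + 1), v g (t + 1) - ∑ g ∈ M, v g (q + 1) := by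
  have hg : ∀ g, ∑ t ∈ range (deficitBundle q M g), v g (t + 1) =
      ∑ t ∈ range (q + 1), v g (t + 1) - if g ∈ M then v g (q + 1) else 0 := by
    intro g
    by_cases h : g ∈ M <;> simp [deficitBundle, h, sum_range_succ]
  simp only [bundleValue, hg, sum_sub_distrib, sum_ite_mem, univ_inter]

lemma bundleValue_swapBundle_deficitBundle (v : β → ℕ → ℝ) (q : ℕ) {M : Finset β} {a c : β}
    (ha : a ∈ M) (hc : c ∉ M) :
    bundleValue v (swapBundle (deficitBundle q M) c a) =
      bundleValue v (deficitBundle q M) + v a (q + 1) - v c (q + 1) := by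
  rw [swapBundle_deficitBundle ha hc, bundleValue_deficitBundle, bundleValue_deficitBundle,
    sum_insert (by simp [hc]), sum_erase_eq_sub ha]
  ring

lemma deficitBundle_envyFree_or_swap (v : β → ℕ → ℝ) (q : ℕ) {M M' : Finset β}
    (hcard : #M = #M') (hM : #M ≤ 2) :
    bundleValue v (deficitBundle q M) ≥ bundleValue v (deficitBundle q M') ∨
      ∃ gi gj, 1 ≤ deficitBundle q M gi ∧ 1 ≤ deficitBundle q M' gj ∧
        bundleValue v (swapBundle (deficitBundle q M) gi gj) ≥
          bundleValue v (swapBundle (deficitBundle q M') gj gi) := by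
  have hdiff : bundleValue v (deficitBundle q M) - bundleValue v (deficitBundle q M') =
      ∑ g ∈ M' \ M, v g (q + 1) - ∑ g ∈ M \ M', v g (q + 1) := by
    rw [bundleValue_deficitBundle, bundleValue_deficitBundle, sum_sdiff_sub_sum_sdiff]
    ring
  rcases exists_swap_of_card_le_two (fun g => v g (q + 1)) (card_sdiff_comm hcard)
      ((card_le_card sdiff_subset).trans hM) with h | ⟨a, ha, c, hc, h⟩
  · left
    linarith
  · rw [mem_sdiff] at ha hc
    right
    refine ⟨c, a, one_le_deficitBundle hc.2, one_le_deficitBundle ha.2, ?_⟩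
    rw [bundleValue_swapBundle_deficitBundle v q ha.1 hc.2,
      bundleValue_swapBundle_deficitBundle v q hc.1 ha.2]
    linarith

theorem swapEF_of_mult_eq_deficitBundle {α : Type*} {T : ℕ} (v : α → β → ℕ → ℝ)
    (A : Fin T → α ≃ β) (q m : ℕ) (M : α → Finset β) (hm : m ≤ 2) (hM : ∀ i, #(M i) = m)
    (hA : ∀ i, mult A i = deficitBundle q (M i)) : swapEF v A := by
  intro i j
  rw [hA i, hA j]
  exact deficitBundle_envyFree_or_swap (v i) q ((hM i).trans (hM j).symm) ((hM i).trans_le hm)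

end DeficitBundle

section CyclicMatching

open Fin.NatCast

variable (n T : ℕ) [NeZero n]

def cyclicMatching : Fin T → Fin n ≃ Fin n :=
  fun t => Equiv.addRight ((t : ℕ) : Fin n)

lemma mult_cyclicMatching (i g : Fin n) :
    mult (cyclicMatching n T) i g = T / n + if ((g - i : Fin n) : ℕ) < T % n then 1 else 0 := by
  have hround : ∀ t : ℕ, i + (t : Fin n) = g ↔ t ≡ (g - i : Fin n) [MOD n] := by
    intro t
    rw [add_comm, ← eq_sub_iff_add_eq, Fin.ext_iff, Fin.val_natCast, Nat.ModEq,
      Nat.mod_eq_of_lt (g - i).isLt]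
  simp only [mult, cyclicMatching, Equiv.coe_addRight, hround]
  rw [card_filter,
    Fin.sum_univ_eq_sum_range (fun t => if t ≡ (g - i : Fin n) [MOD n] then 1 else 0),
    ← card_filter, ← Nat.count_eq_card_filter_range, Nat.count_modEq_card _ (NeZero.pos n),
    Nat.mod_eq_of_lt (g - i).isLt]

lemma mult_cyclicMatching_eq_deficitBundle (i : Fin n) :
    mult (cyclicMatching n T) i =
      deficitBundle (T / n) {g | T % n ≤ ((g - i : Fin n) : ℕ)} := by
  funext g
  rw [mult_cyclicMatching]
  by_cases h : T % n ≤ ((g - i : Fin n) : ℕ) <;> simp [deficitBundle, h]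

variable {n} in
lemma card_filter_le_val_sub (r : ℕ) (i : Fin n) :
    #{g : Fin n | r ≤ ((g - i : Fin n) : ℕ)} = n - r := by
  have hshift : #{g : Fin n | r ≤ ((g - i : Fin n) : ℕ)} = #{k : Fin n | r ≤ (k : ℕ)} :=
    card_equiv (Equiv.subRight i) (by simp)
  have hsplit := card_filter_add_card_filter_not (s := univ) (fun k : Fin n => r ≤ (k : ℕ))
  simp only [not_le, Fin.card_filter_val_lt, card_univ, Fintype.card_fin] at hsplit
  omega

end CyclicMatching

/-- For mixed items (arbitrary real-valued valuations) with `n ≥ 2` and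
`T mod n ∈ {n-2, n-1}`, a swapEF repeated matching exists. -/
theorem stmt14 (n T : ℕ) (hn : 2 ≤ n) (hmod : T % n = n - 2 ∨ T % n = n - 1)
    (v : Fin n → Fin n → ℕ → ℝ) :
    ∃ A : Fin T → Fin n ≃ Fin n, swapEF v A := by
  have : NeZero n := ⟨by omega⟩
  exact ⟨cyclicMatching n T, swapEF_of_mult_eq_deficitBundle v _ (T / n) (n - T % n) _
    (by omega) (card_filter_le_val_sub (T % n)) (mult_cyclicMatching_eq_deficitBundle n T)⟩
end

section
/- Consider the repeated matching instance with n = 2 agents, two items g_1 and g_2, T = 1 round, and identical valuations v_1 = v_2 = v given by v(g_1,1) = 1 and v(g_2,1) = −1 (one good and one chore). Then no repeated matching of this instance is EF1 for mixed items: for each of the two possible matchings, the agent receiving g_2 witnesses a violation, i.e., there is no item g for which either v(A_i \ {g}) ≥ v(A_j) or v(A_i) ≥ v(A_j \ {g}) holds for that agent i against the other agent j. -/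
open Finset

/-- `EF1` for mixed items: for every pair of agents `i, j` there is an item whose
removal from either `i`'s or `j`'s bundle eliminates the envy of `i` towards `j`. -/
def EF1mixed {α β : Type*} [Fintype β] [DecidableEq β] {T : ℕ}
    (v : α → β → ℕ → ℝ) (A : Fin T → α ≃ β) : Prop :=
  ∀ i j : α, ∃ g : β,
    bundleValue (v i) (removeOne (mult A i) g) ≥ bundleValue (v i) (mult A j) ∨
    bundleValue (v i) (mult A i) ≥ bundleValue (v i) (removeOne (mult A j) g)

/-
Proof idea: in a single round each agent holds exactly one item. The agent `i` holding the chore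
values her bundle at `-1` and the other bundle at `1`; deleting one item from either bundle
only moves one side to `0`, which never closes the gap.
-/

section SingleRound

variable {α β : Type*} [DecidableEq β]

theorem mult_fin_one (A : Fin 1 → α ≃ β) (i : α) :
    mult A i = fun g => if A 0 i = g then 1 else 0 := by
  funext g
  by_cases h : A 0 i = g <;> simp [mult, Finset.filter_singleton, h]

theorem removeOne_ite_eq (a g : β) :
    removeOne (fun g' => if a = g' then 1 else 0) g =
      if g = a then 0 else fun g' => if a = g' then 1 else 0 := by
  funext g'
  by_cases hg : g = a <;> by_cases h : g' = g <;> simp [removeOne, h, hg] <;> grind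

variable [Fintype β]

theorem bundleValue_ite_eq (v : β → ℕ → ℝ) (a : β) :
    bundleValue v (fun g => if a = g then 1 else 0) = v a 1 := by
  rw [bundleValue, Finset.sum_eq_single a (fun b _ hb => by simp [Ne.symm hb]) (by simp)]
  simp

theorem bundleValue_removeOne_ite_eq (v : β → ℕ → ℝ) (a g : β) :
    bundleValue v (removeOne (fun g' => if a = g' then 1 else 0) g) = if g = a then 0 else v a 1 := by
  rw [removeOne_ite_eq, apply_ite (bundleValue v), bundleValue_ite_eq]
  simp [bundleValue]

theorem bundleValue_mult_fin_one (v : β → ℕ → ℝ) (A : Fin 1 → α ≃ β) (i : α) :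
    bundleValue v (mult A i) = v (A 0 i) 1 := by
  rw [mult_fin_one, bundleValue_ite_eq]

theorem bundleValue_removeOne_mult_fin_one (v : β → ℕ → ℝ) (A : Fin 1 → α ≃ β) (i : α) (g : β) :
    bundleValue v (removeOne (mult A i) g) = if g = A 0 i then 0 else v (A 0 i) 1 := by
  rw [mult_fin_one, bundleValue_removeOne_ite_eq]

theorem not_exists_envy_removal_of_single_round (A : Fin 1 → α ≃ β) {v : β → ℕ → ℝ} {i j : α}
    (hi : v (A 0 i) 1 < 0) (hj : 0 < v (A 0 j) 1) :
    ¬ ∃ g : β,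
      (bundleValue v (removeOne (mult A i) g) ≥ bundleValue v (mult A j) ∨
       bundleValue v (mult A i) ≥ bundleValue v (removeOne (mult A j) g)) := by
  rintro ⟨g, hg | hg⟩
  · rw [bundleValue_removeOne_mult_fin_one, bundleValue_mult_fin_one] at hg
    split_ifs at hg <;> linarith
  · rw [bundleValue_removeOne_mult_fin_one, bundleValue_mult_fin_one] at hg
    split_ifs at hg <;> linarith

end SingleRound

theorem Equiv.apply_eq_zero_of_apply_eq_one {α : Type*} (e : α ≃ Fin 2) {i j : α} (hi : e i = 1) (hji : j ≠ i) :
    e j = 0 := by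
  have : e j ≠ 1 := fun h => hji (e.injective (h.trans hi.symm))
  omega

/-- With two agents, one good (item `0`, value `1`) and one chore (item `1`,
value `-1`) and a single round, no repeated matching is EF1 for mixed items;
the agent receiving the chore witnesses the violation. -/
theorem stmt16 (v : Fin 2 → ℕ → ℝ) (hv0 : v 0 1 = 1) (hv1 : v 1 1 = -1) :
    ∀ A : Fin 1 → Fin 2 ≃ Fin 2,
      ¬ EF1mixed (fun _ : Fin 2 => v) A ∧
      ∀ i j : Fin 2, A 0 i = 1 → j ≠ i →
        ¬ ∃ g : Fin 2,
          (bundleValue v (removeOne (mult A i) g) ≥ bundleValue v (mult A j) ∨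
           bundleValue v (mult A i) ≥ bundleValue v (removeOne (mult A j) g)) := by
  intro A
  have chore_holder_envies : ∀ i j : Fin 2, A 0 i = 1 → j ≠ i → _ := fun i j hi hji =>
    not_exists_envy_removal_of_single_round A (by rw [hi]; linarith)
      (by rw [Equiv.apply_eq_zero_of_apply_eq_one (A 0) hi hji, hv0]; norm_num)
  refine ⟨fun hEF1 => ?_, chore_holder_envies⟩
  have hne : (A 0).symm 0 ≠ (A 0).symm 1 := by simp
  exact chore_holder_envies _ _ ((A 0).apply_symm_apply 1) hne (hEF1 _ _)
end
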